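/- arXiv:math/0505639 — 2 statements merged into one kernel-verified Lean document; each statement's English description precedes it below -/
import Mathlib

section
/- (Theorem 3.1, type 1 tails) Under the linear quantile regression setup with type 1 tails (ξ = 0), there exists a vector c ∈ ℝ^d with μ_Xᵀc = 0 such that K(x) = exp(−xᵀc) for every x ∈ 𝐗. -/
/-!
Write `q τ` for the quantile of `Fu` and `q_x τ = xᵀγ(τ)` for that of `F(·|x)`. In both cases the
tail filter `lfil` is `comap Fu (𝓝[>] 0)`, the filter of the lower tail of `Fu`, and `q τ` tends
to it as `τ ↓ 0`. Since `Fu (q τ) ~ τ`, tail equivalence and the Gumbel limit give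
`F(q τ + v a(q τ) | x) ~ K(x) eᵛ τ`, so `(q_x τ - q τ) / a(q τ) → -log K(x)`.
The left side is the functional `w ↦ wᵀγ(τ) / a(q τ)` evaluated at `x - μ_X`. These functionals
converge on a subspace, with a linear limit; in direction `μ_X` a limit `κ` can only be `0`,
because `q τ` and `q τ - 2κ a(q τ)` both lie in the tail and so have the same sign.
Extending the limit functional by `0` on `μ_X` gives `c`.
-/

open MeasureTheory Filter Topology Real

lemma tendsto_sub_div_of_mem_Icc {ι : Type*} {F : Filter ι} {q z a : ι → ℝ} {L : ℝ}
    (ha : ∀ᶠ t in F, 0 < a t)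
    (h : ∀ v₁ v₂, v₁ < L → L < v₂ →
      ∀ᶠ t in F, q t ∈ Set.Icc (z t + v₁ * a t) (z t + v₂ * a t)) :
    Tendsto (fun t => (q t - z t) / a t) F (𝓝 L) := by
  refine tendsto_order.2 ⟨fun b hb => ?_, fun b hb => ?_⟩
  · obtain ⟨v, hbv, hvL⟩ := exists_between hb
    filter_upwards [ha, h v (L + 1) hvL (lt_add_one L)] with t hat hq
    rw [lt_div_iff₀ hat]
    nlinarith [hq.1]
  · obtain ⟨v, hLv, hvb⟩ := exists_between hb
    filter_upwards [ha, h (L - 1) v (sub_one_lt L) hLv] with t hat hq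
    rw [div_lt_iff₀ hat]
    nlinarith [hq.2]

/-- `(z/a) (z/a - 2κ)` tends to `-κ²` and has the sign of `z (z - 2κ a)`. -/
lemma eq_zero_of_tendsto_div {ι : Type*} {F : Filter ι} [F.NeBot] {z a : ι → ℝ} {κ : ℝ}
    (hlim : Tendsto (fun t => z t / a t) F (𝓝 κ)) (ha : ∀ᶠ t in F, a t ≠ 0)
    (hpos : ∀ᶠ t in F, 0 < z t * (z t + -2 * κ * a t)) : κ = 0 := by
  have hnonneg : 0 ≤ κ * (κ + -2 * κ) := ge_of_tendsto (hlim.mul (hlim.add_const _)) <| by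
    filter_upwards [ha, hpos] with t hat ht
    have hsq : z t / a t * (z t / a t + -2 * κ) = z t * (z t + -2 * κ * a t) / a t ^ 2 := by
      field_simp
    rw [hsq]
    exact (div_pos ht (sq_pos_of_ne_zero hat)).le
  nlinarith [sq_nonneg κ]

section LimitFunctional

variable {ι 𝕜 E : Type*} [Field 𝕜] [TopologicalSpace 𝕜] [IsTopologicalRing 𝕜]
  [AddCommGroup E] [Module 𝕜 E]

def convergentSubmodule (g : ι → Module.Dual 𝕜 E) (F : Filter ι) : Submodule 𝕜 E where
  carrier := {w | ∃ r, Tendsto (fun t => g t w) F (𝓝 r)}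
  add_mem' := fun ⟨r, hr⟩ ⟨s, hs⟩ => ⟨r + s, by simpa using hr.add hs⟩
  zero_mem' := ⟨0, by simpa using tendsto_const_nhds⟩
  smul_mem' := fun c _ ⟨r, hr⟩ => ⟨c * r, by simpa using hr.const_mul c⟩

noncomputable def limFunctional [T2Space 𝕜] (g : ι → Module.Dual 𝕜 E) (F : Filter ι) [F.NeBot] :
    Module.Dual 𝕜 (convergentSubmodule g F) where
  toFun w := limUnder F fun t => g t w
  map_add' w w' := tendsto_nhds_unique (tendsto_nhds_limUnder (w + w').2) <| by
    simpa using (tendsto_nhds_limUnder w.2).add (tendsto_nhds_limUnder w'.2)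
  map_smul' c w := tendsto_nhds_unique (tendsto_nhds_limUnder (c • w).2) <| by
    simpa using (tendsto_nhds_limUnder w.2).const_mul c

lemma exists_dual_eq_of_tendsto [T2Space 𝕜] {F : Filter ι} [F.NeBot]
    (g : ι → Module.Dual 𝕜 E) {e : E} (he : ∀ r, Tendsto (fun t => g t e) F (𝓝 r) → r = 0)
    {α : Type*} {s : Set α}
    {v : α → E} {L : α → 𝕜} (hv : ∀ x ∈ s, Tendsto (fun t => g t (v x)) F (𝓝 (L x))) :
    ∃ φ : Module.Dual 𝕜 E, φ e = 0 ∧ ∀ x ∈ s, φ (v x) = L x := by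
  obtain ⟨φ, hφ, hφe⟩ : ∃ φ : Module.Dual 𝕜 E,
      φ.comp (convergentSubmodule g F).subtype = limFunctional g F ∧ φ e = 0 := by
    by_cases h : e ∈ convergentSubmodule g F
    · obtain ⟨φ, hφ⟩ := LinearMap.exists_extend (limFunctional g F)
      exact ⟨φ, hφ, (LinearMap.congr_fun hφ ⟨e, h⟩).trans
        (he _ (tendsto_nhds_limUnder h))⟩
    · exact LinearMap.exists_extend_of_notMem _ h 0
  refine ⟨φ, hφe, fun x hx => ?_⟩
  have hmem : v x ∈ convergentSubmodule g F := ⟨L x, hv x hx⟩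
  exact (LinearMap.congr_fun hφ ⟨v x, hmem⟩).trans
    (tendsto_nhds_unique (tendsto_nhds_limUnder hmem) (hv x hx))

lemma exists_dotProduct_eq_of_tendsto {n : Type*} [Fintype n] [DecidableEq n] [T2Space 𝕜]
    {F : Filter ι} [F.NeBot]
    (β : ι → n → 𝕜) {m : n → 𝕜} (hm : ∀ κ, Tendsto (fun t => m ⬝ᵥ β t) F (𝓝 κ) → κ = 0)
    {s : Set (n → 𝕜)} {L : (n → 𝕜) → 𝕜}
    (hs : ∀ x ∈ s, Tendsto (fun t => (x - m) ⬝ᵥ β t) F (𝓝 (L x))) :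
    ∃ c, m ⬝ᵥ c = 0 ∧ ∀ x ∈ s, x ⬝ᵥ c = L x := by
  have hg : ∀ t w, dotProductEquiv 𝕜 n (β t) w = w ⬝ᵥ β t := fun _ _ => dotProduct_comm _ _
  obtain ⟨φ, hφm, hφs⟩ := exists_dual_eq_of_tendsto (fun t => dotProductEquiv 𝕜 n (β t))
    (e := m) (v := fun x => x - m) (by simpa only [hg] using hm) (by simpa only [hg] using hs)
  have hφ : ∀ w, w ⬝ᵥ (dotProductEquiv 𝕜 n).symm φ = φ w := fun w => by
    rw [dotProduct_comm, ← dotProductEquiv_apply_apply, LinearEquiv.apply_symm_apply]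
  refine ⟨(dotProductEquiv 𝕜 n).symm φ, by rw [hφ, hφm], fun x hx => ?_⟩
  rw [hφ, ← hφs x hx, map_sub, hφm, sub_zero]

end LimitFunctional

noncomputable def quantile (g : ℝ → ℝ) (τ : ℝ) : ℝ := sInf {z | τ < g z}

section Quantile

variable {g : ℝ → ℝ} {τ w w₁ w₂ : ℝ}

lemma bddBelow_setOf_lt_of_le (hg : Monotone g) (hw : g w ≤ τ) : BddBelow {z | τ < g z} :=
  ⟨w, fun z (hz : τ < g z) => le_of_not_gt fun hzw => (hz.trans_le ((hg hzw.le).trans hw)).false⟩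

lemma quantile_le (hbdd : BddBelow {z | τ < g z}) (hw : τ < g w) : quantile g τ ≤ w :=
  csInf_le hbdd hw

lemma apply_le_of_lt_quantile (hbdd : BddBelow {z | τ < g z}) (hw : w < quantile g τ) :
    g w ≤ τ :=
  le_of_not_gt fun h => (quantile_le hbdd h).not_gt hw

lemma le_apply_quantile (hg : Monotone g) (hrc : ∀ z, ContinuousWithinAt g (Set.Ici z) z)
    (hne : {z | τ < g z}.Nonempty) (hbdd : BddBelow {z | τ < g z}) :
    τ ≤ g (quantile g τ) := by
  have hlt : ∀ w, quantile g τ < w → τ < g w := fun w hw => by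
    obtain ⟨z, hz, hzw⟩ := (csInf_lt_iff hbdd hne).1 hw
    exact hz.trans_le (hg hzw.le)
  exact ge_of_tendsto ((hrc _).mono_left (nhdsWithin_mono _ Set.Ioi_subset_Ici_self))
    (eventually_nhdsWithin_of_forall fun w hw => (hlt w hw).le)

lemma quantile_mem_Icc (hg : Monotone g) (h₁ : g w₁ < τ) (h₂ : τ < g w₂) :
    quantile g τ ∈ Set.Icc w₁ w₂ :=
  ⟨le_csInf ⟨w₂, h₂⟩ fun _ hz => hg.reflect_lt (h₁.trans hz) |>.le,
    quantile_le (bddBelow_setOf_lt_of_le hg h₁.le) h₂⟩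

end Quantile

def HasGumbelTail (Fu a : ℝ → ℝ) (l : Filter ℝ) : Prop :=
  ∀ v : ℝ, Tendsto (fun z => Fu (z + v * a z) / Fu z) l (𝓝 (exp v))

namespace HasGumbelTail

variable {Fu a : ℝ → ℝ} {l : Filter ℝ}

lemma eventually_pos_apply_add_mul (htail : HasGumbelTail Fu a l) (hpos : ∀ᶠ z in l, 0 < Fu z)
    (v : ℝ) : ∀ᶠ z in l, 0 < Fu (z + v * a z) := by
  filter_upwards [(htail v).eventually_const_lt (exp_pos v), hpos] with z hratio hz
  exact (div_pos_iff_of_pos_right hz).1 hratio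

lemma eventually_scale_pos (htail : HasGumbelTail Fu a l) (hFu : Monotone Fu)
    (hpos : ∀ᶠ z in l, 0 < Fu z) : ∀ᶠ z in l, 0 < a z := by
  filter_upwards [(htail 1).eventually_const_lt (one_lt_exp_iff.2 one_pos), hpos]
    with z hratio hz
  have := hFu.reflect_lt ((one_lt_div hz).1 hratio)
  linarith

/-- A Gumbel tail cannot stay bounded away from zero: shifting by a negative multiple of `a`
would not change the ratio in the limit. -/
lemma eq_zero_of_tendsto [l.NeBot] (htail : HasGumbelTail Fu a l) {p v : ℝ} (hv : v < 0)
    (hlim : Tendsto Fu l (𝓝 p)) (hpos : ∀ᶠ z in l, 0 < Fu z)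
    (hle : ∀ᶠ z in l, p ≤ Fu (z + v * a z)) : p = 0 := by
  by_contra hp
  have hone : Tendsto (fun z => p / Fu z) l (𝓝 1) := by
    rw [← div_self hp]
    exact tendsto_const_nhds.div hlim hp
  have : 1 ≤ exp v := le_of_tendsto_of_tendsto hone (htail v) <| by
    filter_upwards [hpos, hle] with z hz hpz
    exact div_le_div_of_nonneg_right hpz hz.le
  exact (exp_lt_one_iff.2 hv).not_ge this

end HasGumbelTail

section LowerTail

variable {Fu : ℝ → ℝ} {l : Filter ℝ}

lemma eventually_pos_of_eq_comap (hl : l = comap Fu (𝓝[>] 0)) : ∀ᶠ z in l, 0 < Fu z := by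
  subst hl
  exact tendsto_comap.eventually self_mem_nhdsWithin

lemma exists_apply_mem_Ioo_of_eq_comap [l.NeBot] (hl : l = comap Fu (𝓝[>] 0)) {ε : ℝ}
    (hε : 0 < ε) : ∃ b, Fu b ∈ Set.Ioo 0 ε := by
  subst hl
  exact (tendsto_comap.eventually (Ioo_mem_nhdsGT hε)).exists

lemma eventually_nonempty_bddBelow_setOf_lt [l.NeBot] (hl : l = comap Fu (𝓝[>] 0))
    (hFu : Monotone Fu) :
    ∀ᶠ τ in 𝓝[>] (0:ℝ), {z | τ < Fu z}.Nonempty ∧ BddBelow {z | τ < Fu z} := by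
  obtain ⟨b, hb⟩ := exists_apply_mem_Ioo_of_eq_comap hl one_pos
  filter_upwards [Ioo_mem_nhdsGT hb.1] with τ hτ
  obtain ⟨w, hw⟩ := exists_apply_mem_Ioo_of_eq_comap hl hτ.1
  exact ⟨⟨b, hτ.2⟩, bddBelow_setOf_lt_of_le hFu hw.2.le⟩

variable [l.NeBot] (hl : l = comap Fu (𝓝[>] 0)) (hFu : Monotone Fu)
  (hrc : ∀ z, ContinuousWithinAt Fu (Set.Ici z) z)
include hl hFu hrc

lemma eventually_le_apply_quantile : ∀ᶠ τ in 𝓝[>] (0:ℝ), τ ≤ Fu (quantile Fu τ) := by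
  filter_upwards [eventually_nonempty_bddBelow_setOf_lt hl hFu] with τ h
  exact le_apply_quantile hFu hrc h.1 h.2

lemma tendsto_quantile : Tendsto (quantile Fu) (𝓝[>] 0) l := by
  have hle := eventually_le_apply_quantile hl hFu hrc
  have hτ : ∀ᶠ τ in 𝓝[>] (0:ℝ), 0 < τ := self_mem_nhdsWithin
  rw [hl, tendsto_comap_iff, tendsto_nhdsWithin_iff]
  refine ⟨tendsto_order.2 ⟨fun b hb => ?_, fun ε hε => ?_⟩, ?_⟩
  · filter_upwards [hle, hτ] with τ h hτ using hb.trans (hτ.trans_le h)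
  · obtain ⟨b, hb⟩ := exists_apply_mem_Ioo_of_eq_comap hl hε
    filter_upwards [eventually_nonempty_bddBelow_setOf_lt hl hFu, Ioo_mem_nhdsGT hb.1]
      with τ h hτ
    exact (hFu (quantile_le h.2 hτ.2)).trans_lt hb.2
  · filter_upwards [hle, hτ] with τ h hτ using hτ.trans_le h

end LowerTail

namespace HasGumbelTail

variable {Fu a : ℝ → ℝ} {l : Filter ℝ}

lemma tendsto_add_mul (htail : HasGumbelTail Fu a l) (hl : l = comap Fu (𝓝[>] 0))
    {ι : Type*} {F : Filter ι} {f : ι → ℝ} (hf : Tendsto f F l) (v : ℝ) :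
    Tendsto (fun t => f t + v * a (f t)) F l := by
  have hpos := eventually_pos_of_eq_comap hl
  have hFu : Tendsto (fun t => Fu (f t)) F (𝓝 0) := by
    subst hl
    exact (tendsto_nhdsWithin_iff.1 (tendsto_comap_iff.1 hf)).1
  have hprod := ((htail v).comp hf).mul hFu
  rw [mul_zero] at hprod
  rw [hl, tendsto_comap_iff, tendsto_nhdsWithin_iff]
  refine ⟨hprod.congr' ?_, hf.eventually (htail.eventually_pos_apply_add_mul hpos v)⟩
  filter_upwards [hf.eventually hpos] with t ht
  exact div_mul_cancel₀ _ ht.ne'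

variable [l.NeBot] (htail : HasGumbelTail Fu a l) (hl : l = comap Fu (𝓝[>] 0))
  (hFu : Monotone Fu) (hrc : ∀ z, ContinuousWithinAt Fu (Set.Ici z) z)
include htail hl hFu hrc

/-- `τ ≤ Fu (q τ)`, and for `v < 0` the value `Fu (q τ + v a(q τ))` is `≤ τ` and asymptotically
`eᵛ Fu (q τ)`, with `eᵛ` as close to `1` as we like. -/
lemma tendsto_apply_quantile_div_self :
    Tendsto (fun τ => Fu (quantile Fu τ) / τ) (𝓝[>] 0) (𝓝 1) := by
  have hq := tendsto_quantile hl hFu hrc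
  have hle := eventually_le_apply_quantile hl hFu hrc
  have hτ : ∀ᶠ τ in 𝓝[>] (0:ℝ), 0 < τ := self_mem_nhdsWithin
  refine tendsto_order.2 ⟨fun b hb => ?_, fun b hb => ?_⟩
  · filter_upwards [hle, hτ] with τ h hτ
    exact hb.trans_le ((one_le_div hτ).2 h)
  · set v := b⁻¹ - 1 with hv_def
    have hv : v < 0 := by linarith [inv_lt_one_of_one_lt₀ hb]
    have hbv : b⁻¹ < exp v := by simpa [hv_def] using add_one_lt_exp hv.ne
    filter_upwards [hq.eventually ((htail v).eventually_const_lt hbv),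
      hq.eventually (htail.eventually_scale_pos hFu (eventually_pos_of_eq_comap hl)),
      eventually_nonempty_bddBelow_setOf_lt hl hFu, hle, hτ] with τ hratio ha hS hle hτ
    have hFq : 0 < Fu (quantile Fu τ) := hτ.trans_le hle
    have hw : Fu (quantile Fu τ + v * a (quantile Fu τ)) ≤ τ :=
      apply_le_of_lt_quantile hS.2 (by nlinarith)
    rw [lt_div_iff₀ hFq] at hratio
    rw [div_lt_iff₀ hτ]
    calc Fu (quantile Fu τ) = b * (b⁻¹ * Fu (quantile Fu τ)) := by
          field_simp
      _ < b * τ := by gcongr; linarith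

lemma tendsto_apply_add_mul_div_self {G : ℝ → ℝ} {k : ℝ}
    (hG : Tendsto (fun z => G z / Fu z) l (𝓝 k)) (v : ℝ) :
    Tendsto (fun τ => G (quantile Fu τ + v * a (quantile Fu τ)) / τ) (𝓝[>] 0)
      (𝓝 (k * exp v)) := by
  have hq := tendsto_quantile hl hFu hrc
  have hw := htail.tendsto_add_mul hl hq v
  have hpos := eventually_pos_of_eq_comap hl
  have h := ((hG.comp hw).mul ((htail v).comp hq)).mul
    (htail.tendsto_apply_quantile_div_self hl hFu hrc)
  rw [mul_one] at h
  refine h.congr' ?_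
  filter_upwards [hw.eventually hpos, hq.eventually hpos] with τ h₁ h₂
  simp only [Function.comp_apply]
  field_simp

lemma tendsto_quantile_sub_div {G : ℝ → ℝ} (hG : Monotone G) {k : ℝ} (hk : 0 < k)
    (hGk : Tendsto (fun z => G z / Fu z) l (𝓝 k)) :
    Tendsto (fun τ => (quantile G τ - quantile Fu τ) / a (quantile Fu τ)) (𝓝[>] 0)
      (𝓝 (-log k)) := by
  have hq := tendsto_quantile hl hFu hrc
  refine tendsto_sub_div_of_mem_Icc
    (hq.eventually (htail.eventually_scale_pos hFu (eventually_pos_of_eq_comap hl)))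
    fun v₁ v₂ h₁ h₂ => ?_
  have hk' : k * exp (-log k) = 1 := by rw [exp_neg, exp_log hk, mul_inv_cancel₀ hk.ne']
  have hlt₁ : k * exp v₁ < 1 := hk' ▸ by gcongr
  have hlt₂ : 1 < k * exp v₂ := hk' ▸ by gcongr
  filter_upwards
    [(htail.tendsto_apply_add_mul_div_self hl hFu hrc hGk v₁).eventually_lt_const hlt₁,
      (htail.tendsto_apply_add_mul_div_self hl hFu hrc hGk v₂).eventually_const_lt hlt₂,
      self_mem_nhdsWithin] with τ h₁ h₂ hτ
  exact quantile_mem_Icc hG ((div_lt_one hτ).1 h₁) ((one_lt_div hτ).1 h₂)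

lemma eq_zero_of_tendsto_quantile_div (hsign : ∀ᶠ p in l ×ˢ l, 0 < p.1 * p.2) {κ : ℝ}
    (hκ : Tendsto (fun τ => quantile Fu τ / a (quantile Fu τ)) (𝓝[>] 0) (𝓝 κ)) : κ = 0 := by
  have hq := tendsto_quantile hl hFu hrc
  have ha := hq.eventually (htail.eventually_scale_pos hFu (eventually_pos_of_eq_comap hl))
  exact eq_zero_of_tendsto_div hκ (ha.mono fun _ h => h.ne')
    ((hq.prodMk (htail.tendsto_add_mul hl hq _)).eventually hsign)

end HasGumbelTail

section Endpoints

variable {Fu a : ℝ → ℝ}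

lemma nhdsGT_zero_eq_comap (hFu : Monotone Fu) (hrc : ContinuousWithinAt Fu (Set.Ici 0) 0)
    (hneg : ∀ z < (0:ℝ), Fu z = 0) (hpos : ∀ z > (0:ℝ), 0 < Fu z)
    (htail : HasGumbelTail Fu a (𝓝[>] 0)) : 𝓝[>] (0:ℝ) = comap Fu (𝓝[>] 0) := by
  have hposl : ∀ᶠ z in 𝓝[>] (0:ℝ), 0 < Fu z := eventually_nhdsWithin_of_forall hpos
  have hlim : Tendsto Fu (𝓝[>] 0) (𝓝 (Fu 0)) :=
    hrc.mono_left (nhdsWithin_mono _ Set.Ioi_subset_Ici_self)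
  have hnonneg : ∀ z, 0 < Fu z → 0 ≤ z := fun z hz => le_of_not_gt fun h => hz.ne' (hneg z h)
  have h0 : Fu 0 = 0 := htail.eq_zero_of_tendsto (v := -1) (by norm_num) hlim hposl <| by
    filter_upwards [htail.eventually_pos_apply_add_mul hposl (-1)] with z hz
    exact hFu (hnonneg _ hz)
  refine le_antisymm
    (tendsto_iff_comap.1 (tendsto_nhdsWithin_iff.2 ⟨by rwa [h0] at hlim, hposl⟩)) ?_
  refine (nhdsGT_basis (0:ℝ)).ge_iff.2 fun δ hδ =>
    ⟨Set.Ioo 0 (Fu δ), Ioo_mem_nhdsGT (hpos δ hδ), fun z hz => ⟨?_, hFu.reflect_lt hz.2⟩⟩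
  exact (hnonneg z hz.1).lt_of_ne fun h => hz.1.ne' (h ▸ h0)

lemma atBot_eq_comap (hFu : Monotone Fu) (hpos : ∀ z, 0 < Fu z)
    (htail : HasGumbelTail Fu a atBot) : (atBot : Filter ℝ) = comap Fu (𝓝[>] 0) := by
  have hposl : ∀ᶠ z in atBot, 0 < Fu z := Eventually.of_forall hpos
  have hbdd : BddBelow (Set.range Fu) := ⟨0, Set.forall_mem_range.2 fun z => (hpos z).le⟩
  have hlim := tendsto_atBot_ciInf hFu hbdd
  have h0 : ⨅ z, Fu z = 0 := htail.eq_zero_of_tendsto (v := -1) (by norm_num) hlim hposl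
    (Eventually.of_forall fun _ => ciInf_le hbdd _)
  refine le_antisymm
    (tendsto_iff_comap.1 (tendsto_nhdsWithin_iff.2 ⟨by rwa [h0] at hlim, hposl⟩)) ?_
  exact atBot_basis.ge_iff.2 fun b _ =>
    ⟨Set.Ioo 0 (Fu b), Ioo_mem_nhdsGT (hpos b), fun z hz => (hFu.reflect_lt hz.2).le⟩

end Endpoints

theorem extremal_qr_thm31_type1_general
    (d : ℕ)
    (μ : Measure (Fin d → ℝ))
    (Xs : Set (Fin d → ℝ))
    (η : ℝ) (hη : η ∈ Set.Ioc (0:ℝ) 1)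
    (γ : ℝ → Fin d → ℝ)
    (F : (Fin d → ℝ) → ℝ → ℝ)
    (hFmono : ∀ x ∈ Xs, Monotone (F x))
    (hlin : ∀ τ ∈ Set.Ioc (0:ℝ) η, ∀ x ∈ Xs, sInf {z | τ < F x z} = ∑ i, x i * γ τ i)
    (Fu : ℝ → ℝ)
    (hFumono : Monotone Fu)
    (hFurc : ∀ z : ℝ, ContinuousWithinAt Fu (Set.Ici z) z)
    (hFuinv : ∀ τ ∈ Set.Ioc (0:ℝ) η, sInf {z | τ < Fu z} = ∑ i, (∫ x, x i ∂μ) * γ τ i)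
    (K : (Fin d → ℝ) → ℝ)
    (hKpos : ∀ x ∈ Xs, 0 < K x)
    (a : ℝ → ℝ) (lfil : Filter ℝ)
    (hcase :
      (lfil = 𝓝[>] (0:ℝ) ∧ (∀ z < (0:ℝ), Fu z = 0) ∧ (∀ z > (0:ℝ), 0 < Fu z) ∧
        (∀ z > (0:ℝ), IntegrableOn Fu (Set.Ioc 0 z)) ∧
        (∀ z > (0:ℝ), a z = (∫ v in Set.Ioc (0:ℝ) z, Fu v) / Fu z)) ∨
      (lfil = atBot ∧ (∀ z : ℝ, 0 < Fu z) ∧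
        (∀ z : ℝ, IntegrableOn Fu (Set.Iic z)) ∧
        (∀ z : ℝ, a z = (∫ v in Set.Iic z, Fu v) / Fu z)))
    (htail1 : ∀ v : ℝ, Tendsto (fun z => Fu (z + v * a z) / Fu z) lfil (𝓝 (Real.exp v)))
    (htaileq : TendstoUniformlyOn (fun z x => F x z / Fu z) K lfil Xs)
    :
    ∃ c : Fin d → ℝ, (∑ i, (∫ x, x i ∂μ) * c i) = 0 ∧
      ∀ x ∈ Xs, K x = Real.exp (-(∑ i, x i * c i)) := by
  have htail : HasGumbelTail Fu a lfil := htail1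
  obtain ⟨hne, hl, hsign⟩ : lfil.NeBot ∧ lfil = comap Fu (𝓝[>] 0) ∧
      ∀ᶠ p in lfil ×ˢ lfil, 0 < p.1 * p.2 := by
    rcases hcase with ⟨rfl, hneg, hpos, -, -⟩ | ⟨rfl, hpos, -, -⟩
    · exact ⟨inferInstance, nhdsGT_zero_eq_comap hFumono (hFurc 0) hneg hpos htail1,
        (eventually_mem_nhdsWithin.prod_mk eventually_mem_nhdsWithin).mono
          fun p hp => mul_pos hp.1 hp.2⟩
    · exact ⟨inferInstance, atBot_eq_comap hFumono hpos htail1,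
        ((eventually_lt_atBot 0).prod_mk (eventually_lt_atBot 0)).mono
          fun p hp => mul_pos_of_neg_of_neg hp.1 hp.2⟩
  set m : Fin d → ℝ := fun i => ∫ x, x i ∂μ
  have hq : ∀ᶠ τ in 𝓝[>] (0:ℝ), m ⬝ᵥ γ τ = quantile Fu τ := by
    filter_upwards [Ioc_mem_nhdsGT hη.1] with τ hτ using (hFuinv τ hτ).symm
  have hqx : ∀ x ∈ Xs, ∀ᶠ τ in 𝓝[>] (0:ℝ), x ⬝ᵥ γ τ = quantile (F x) τ := fun x hx => by
    filter_upwards [Ioc_mem_nhdsGT hη.1] with τ hτ using (hlin τ hτ x hx).symm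
  obtain ⟨c, hcm, hcX⟩ := exists_dotProduct_eq_of_tendsto
    (fun τ => (a (quantile Fu τ))⁻¹ • γ τ) (m := m) (s := Xs) (L := fun x => -log (K x))
    (fun κ hκ => htail.eq_zero_of_tendsto_quantile_div hl hFumono hFurc hsign <| hκ.congr' <| by
      filter_upwards [hq] with τ hτ
      rw [dotProduct_smul, hτ, smul_eq_mul, inv_mul_eq_div])
    (fun x hx => (htail.tendsto_quantile_sub_div hl hFumono hFurc (hFmono x hx) (hKpos x hx)
      (htaileq.tendsto_at hx)).congr' <| by
      filter_upwards [hq, hqx x hx] with τ hτ hτx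
      rw [dotProduct_smul, sub_dotProduct, hτ, hτx, smul_eq_mul, inv_mul_eq_div])
  refine ⟨c, hcm, fun x hx => ?_⟩
  rw [show ∑ i, x i * c i = -log (K x) from hcX x hx, neg_neg, exp_log (hKpos x hx)]

theorem extremal_qr_thm31_type1
    (d : ℕ) (hd : 1 ≤ d)
    (μ : Measure (Fin d → ℝ)) [IsProbabilityMeasure μ]
    (Xs : Set (Fin d → ℝ))
    (hXssupp : ∀ x, x ∈ Xs ↔ ∀ U ∈ 𝓝 x, 0 < μ U)
    (hXscpt : IsCompact Xs)
    (hposdef : (Matrix.of fun i j : Fin d => ∫ x, x i * x j ∂μ).PosDef)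
    (hmean : ∀ i : Fin d, (∫ x, x i ∂μ) = if (i : ℕ) = 0 then (1:ℝ) else 0)
    (η : ℝ) (hη : η ∈ Set.Ioc (0:ℝ) 1)
    (γ : ℝ → Fin d → ℝ)
    (F : (Fin d → ℝ) → ℝ → ℝ)
    (hFmono : ∀ x ∈ Xs, Monotone (F x))
    (hFrc : ∀ x ∈ Xs, ∀ z : ℝ, ContinuousWithinAt (F x) (Set.Ici z) z)
    (hFrange : ∀ x ∈ Xs, ∀ z : ℝ, F x z ∈ Set.Icc (0:ℝ) 1)
    (hlin : ∀ τ ∈ Set.Ioc (0:ℝ) η, ∀ x ∈ Xs, sInf {z | τ < F x z} = ∑ i, x i * γ τ i)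
    (Fu : ℝ → ℝ)
    (hFumono : Monotone Fu)
    (hFurc : ∀ z : ℝ, ContinuousWithinAt Fu (Set.Ici z) z)
    (hFurange : ∀ z : ℝ, Fu z ∈ Set.Icc (0:ℝ) 1)
    (hFuinv : ∀ τ ∈ Set.Ioc (0:ℝ) η, sInf {z | τ < Fu z} = ∑ i, (∫ x, x i ∂μ) * γ τ i)
    (K : (Fin d → ℝ) → ℝ)
    (hKcont : ContinuousOn K Xs)
    (hKbdd : BddAbove (K '' Xs))
    (hKpos : ∀ x ∈ Xs, 0 < K x)
    (a : ℝ → ℝ) (lfil : Filter ℝ)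
    (hcase :
      (lfil = 𝓝[>] (0:ℝ) ∧ (∀ z < (0:ℝ), Fu z = 0) ∧ (∀ z > (0:ℝ), 0 < Fu z) ∧
        (∀ z > (0:ℝ), IntegrableOn Fu (Set.Ioc 0 z)) ∧
        (∀ z > (0:ℝ), a z = (∫ v in Set.Ioc (0:ℝ) z, Fu v) / Fu z)) ∨
      (lfil = atBot ∧ (∀ z : ℝ, 0 < Fu z) ∧
        (∀ z : ℝ, IntegrableOn Fu (Set.Iic z)) ∧
        (∀ z : ℝ, a z = (∫ v in Set.Iic z, Fu v) / Fu z)))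
    (htail1 : ∀ v : ℝ, Tendsto (fun z => Fu (z + v * a z) / Fu z) lfil (𝓝 (Real.exp v)))
    (htaileq : TendstoUniformlyOn (fun z x => F x z / Fu z) K lfil Xs)
    :
    ∃ c : Fin d → ℝ, (∑ i, (∫ x, x i ∂μ) * c i) = 0 ∧
      ∀ x ∈ Xs, K x = Real.exp (-(∑ i, x i * c i)) :=
  extremal_qr_thm31_type1_general d μ Xs η hη γ F hFmono hlin Fu hFumono hFurc hFuinv K hKpos a lfil
    hcase htail1 htaileq
end

section
/- (Lemma 9.1(iii), type 3 tails) Under the linear quantile regression setup with type 3 tails of index ξ < 0, there exists a vector c ∈ ℝ^d with μ_Xᵀc = 1, xᵀc > 0 and K(x) = (xᵀc)^{1/ξ} for all x ∈ 𝐗, such that for every compact set M ⊂ (0,1) ∪ (1,∞) and every compact set L ⊂ (0,∞): (a) sup_{m∈M, s∈L} ‖γ₋₁(sτ′)/(F_u⁻¹(m s τ′) − F_u⁻¹(sτ′)) − c₋₁/(m^{−ξ} − 1)‖ → 0 as τ′ ↘ 0, with F_u⁻¹(m s τ′) − F_u⁻¹(sτ′) ≠ 0 for all sufficiently small τ′ and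 all m ∈ M, s ∈ L; and (b) sup_{s∈L} ‖γ₋₁(sτ′)/F_u⁻¹(sτ′) − c₋₁‖ → 0 as τ′ ↘ 0 (all quantile arguments lying in (0,η] for τ′ small enough). -/
open MeasureTheory Filter Topology Real
open Set

/-!
Write `q` for the lower quantile function of `F_u`. As `F_u` is regularly varying at `0` with
index `α = -1/ξ`, `F_u(q(τ)) ~ τ`, so `G(v q(τ)) / τ → k v^α` for every `G ~ k F_u`; comparing this
limit with `1` shows `q_G(τ) / q(τ) → k^{-1/α}` when `G` is monotone. With `G = F(·|x)` the linear
specification gives `xᵀγ(τ) / q(τ) → K(x)^ξ` for each `x` in the support, and the support spans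
`ℝ^d` (a vector orthogonal to it would be a null direction of the positive definite second-moment
matrix), so `γ(τ) / q(τ)` converges to some `c`. The case `G = F_u / u` gives
`q(uτ) / q(τ) → u^{-ξ}`, which monotonicity in `u` upgrades to a joint limit in `(τ, u)`
(Pólya's argument); compactness of `M × L` then makes all limits uniform.
-/

structure RegularlyVaryingLowerTail (F : ℝ → ℝ) (α : ℝ) : Prop where
  monotone : Monotone F
  eq_zero_of_neg : ∀ z < 0, F z = 0
  pos : ∀ z > 0, 0 < F z
  index_pos : 0 < α
  tendsto_ratio : ∀ v > 0, Tendsto (fun z => F (v * z) / F z) (𝓝[>] 0) (𝓝 (v ^ α))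

noncomputable def lowerQuantile (F : ℝ → ℝ) (τ : ℝ) : ℝ := sInf {z | τ < F z}

lemma tendsto_snd_mul_fst_nhdsGT_zero {s : ℝ} (hs : 0 < s) :
    Tendsto (fun p : ℝ × ℝ => p.2 * p.1) (𝓝[>] 0 ×ˢ 𝓝 s) (𝓝[>] 0) := by
  refine tendsto_nhdsWithin_iff.2 ⟨?_, ?_⟩
  · have h : Tendsto (fun p : ℝ × ℝ => p.2 * p.1) (𝓝 0 ×ˢ 𝓝 s) (𝓝 (s * 0)) := by
      rw [← nhds_prod_eq]
      exact (continuous_snd.mul continuous_fst).tendsto _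
    simpa using h.mono_left (prod_mono nhdsWithin_le_nhds le_rfl)
  · filter_upwards [prod_mem_prod self_mem_nhdsWithin (Ioi_mem_nhds hs)] with p hp
    exact mul_pos (mem_Ioi.1 hp.2) (mem_Ioi.1 hp.1)

lemma tendsto_const_mul_nhdsGT_zero {s : ℝ} (hs : 0 < s) :
    Tendsto (s * ·) (𝓝[>] 0) (𝓝[>] 0) :=
  (tendsto_snd_mul_fst_nhdsGT_zero hs).comp (tendsto_id.prodMk tendsto_const_nhds)

lemma tendsto_mul_fst_snd_nhdsGT_zero {m s : ℝ} (hs : 0 < s) :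
    Tendsto (fun p : ℝ × ℝ × ℝ => (p.2.2 * p.1, p.2.1)) (𝓝[>] 0 ×ˢ 𝓝 (m, s))
      (𝓝[>] 0 ×ˢ 𝓝 m) := by
  have h : Tendsto (fun p : ℝ × ℝ × ℝ => (p.1, p.2.2)) (𝓝[>] 0 ×ˢ 𝓝 (m, s)) (𝓝[>] 0 ×ˢ 𝓝 s) :=
    tendsto_fst.prodMk ((continuous_snd.tendsto (m, s)).comp tendsto_snd)
  exact ((tendsto_snd_mul_fst_nhdsGT_zero hs).comp h).prodMk
    ((continuous_fst.tendsto (m, s)).comp tendsto_snd)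

lemma tendsto_one_of_rpow_squeeze {ι : Type*} {l : Filter ι} {f : ι → ℝ} {g : ℝ → ι → ℝ}
    {α : ℝ} (hg : ∀ θ > 0, Tendsto (g θ) l (𝓝 (θ ^ α)))
    (hlo : ∀ θ ∈ Ioo 0 1, ∀ᶠ i in l, g θ i ≤ f i) (hhi : ∀ θ > 1, ∀ᶠ i in l, f i ≤ g θ i) :
    Tendsto f l (𝓝 1) := by
  have hcont : Tendsto (· ^ α) (𝓝 (1 : ℝ)) (𝓝 1) := by
    simpa using (Real.continuousAt_rpow_const 1 α (Or.inl one_ne_zero)).tendsto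
  refine tendsto_order.2 ⟨fun a ha => ?_, fun b hb => ?_⟩
  · obtain ⟨θ, hθa, hθ⟩ := ((hcont.eventually (lt_mem_nhds ha)).filter_mono
      nhdsWithin_le_nhds |>.and (Ioo_mem_nhdsLT zero_lt_one)).exists
    filter_upwards [(hg θ hθ.1).eventually (lt_mem_nhds hθa), hlo θ hθ] with i h₁ h₂
    exact h₁.trans_le h₂
  · obtain ⟨θ, hθb, hθ⟩ := ((hcont.eventually (gt_mem_nhds hb)).filter_mono
      nhdsWithin_le_nhds |>.and (self_mem_nhdsWithin (s := Ioi 1))).exists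
    filter_upwards [(hg θ (zero_lt_one.trans hθ)).eventually (gt_mem_nhds hθb), hhi θ hθ]
      with i h₁ h₂
    exact h₂.trans_lt h₁

lemma tendsto_uncurry_of_monotoneOn {ι : Type*} {l : Filter ι} {f : ι → ℝ → ℝ} {g : ℝ → ℝ}
    {x : ℝ} {U : Set ℝ} (hU : U ∈ 𝓝 x) (hmono : ∀ᶠ i in l, MonotoneOn (f i) U)
    (hlim : ∀ y ∈ U, Tendsto (f · y) l (𝓝 (g y))) (hg : ContinuousAt g x) :
    Tendsto (fun p : ι × ℝ => f p.1 p.2) (l ×ˢ 𝓝 x) (𝓝 (g x)) := by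
  refine tendsto_order.2 ⟨fun a ha => ?_, fun b hb => ?_⟩
  · obtain ⟨y, ⟨hay, hyU⟩, hyx⟩ := (((hg.eventually (lt_mem_nhds ha)).and hU).filter_mono
      nhdsWithin_le_nhds |>.and (self_mem_nhdsWithin (s := Iio x))).exists
    filter_upwards [(((hlim _ hyU).eventually (lt_mem_nhds hay)).and hmono).prod_mk
      (inter_mem hU (Ioi_mem_nhds hyx))] with p ⟨⟨h₁, hp⟩, hpU, hyp⟩
    exact h₁.trans_le (hp hyU hpU (le_of_lt hyp))
  · obtain ⟨y, ⟨hby, hyU⟩, hyx⟩ := (((hg.eventually (gt_mem_nhds hb)).and hU).filter_mono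
      nhdsWithin_le_nhds |>.and (self_mem_nhdsWithin (s := Ioi x))).exists
    filter_upwards [(((hlim _ hyU).eventually (gt_mem_nhds hby)).and hmono).prod_mk
      (inter_mem hU (Iio_mem_nhds hyx))] with p ⟨⟨h₁, hp⟩, hpU, hyp⟩
    exact (hp hpU hyU (le_of_lt hyp)).trans_lt h₁

lemma IsCompact.eventually_forall_of_forall_eventually_prod {X Y : Type*} [TopologicalSpace Y]
    {K : Set Y} (hK : IsCompact K) {l : Filter X} {P : X → Y → Prop}
    (hP : ∀ y ∈ K, ∀ᶠ z in l ×ˢ 𝓝 y, P z.1 z.2) : ∀ᶠ x in l, ∀ y ∈ K, P x y :=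
  (Eventually.curry (p := fun z => P z.1 z.2) (hK.mem_prod_nhdsSet_of_forall hP)).mono
    fun _ h => h.self_of_nhdsSet

lemma IsCompact.eventually_forall_abs_sub_lt {X Y : Type*} [TopologicalSpace Y] {K : Set Y}
    (hK : IsCompact K) {l : Filter X} {f : X → Y → ℝ} {g : Y → ℝ}
    (hf : ∀ y ∈ K, Tendsto (fun z : X × Y => f z.1 z.2) (l ×ˢ 𝓝 y) (𝓝 (g y)))
    (hg : ∀ y ∈ K, ContinuousAt g y) {ε : ℝ} (hε : 0 < ε) :
    ∀ᶠ x in l, ∀ y ∈ K, |f x y - g y| < ε := by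
  refine hK.eventually_forall_of_forall_eventually_prod fun y hy => ?_
  have h := (hf y hy).sub ((hg y hy).tendsto.comp tendsto_snd)
  rw [sub_self] at h
  filter_upwards [Metric.tendsto_nhds.1 h ε hε] with z hz
  simpa [Real.dist_eq] using hz

lemma eventually_forall_abs_comp_mul_sub_lt {f : ℝ → ℝ} {a : ℝ}
    (hf : Tendsto f (𝓝[>] 0) (𝓝 a)) {L : Set ℝ} (hL : IsCompact L) (hL0 : L ⊆ Ioi 0) {ε : ℝ}
    (hε : 0 < ε) : ∀ᶠ τ in 𝓝[>] 0, ∀ s ∈ L, |f (s * τ) - a| < ε :=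
  hL.eventually_forall_abs_sub_lt (fun _ hs => hf.comp (tendsto_snd_mul_fst_nhdsGT_zero (hL0 hs)))
    (fun _ _ => continuousAt_const) hε

lemma rpow_ne_one {m β : ℝ} (hm : 0 ≤ m) (hm1 : m ≠ 1) (hβ : β ≠ 0) : m ^ β ≠ 1 := fun h =>
  hm1 <| (rpow_left_inj hm zero_le_one hβ).1 (h.trans (one_rpow β).symm)

lemma exists_tendsto_of_span_eq_top {ι α : Type*} [Fintype ι] {S : Set (ι → ℝ)}
    (hS : Submodule.span ℝ S = ⊤) {l : Filter α} {v : α → ι → ℝ}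
    (h : ∀ x ∈ S, ∃ a, Tendsto (fun t => x ⬝ᵥ v t) l (𝓝 a)) : ∃ c, Tendsto v l (𝓝 c) := by
  classical
  have hall : ∀ x, ∃ a, Tendsto (fun t => x ⬝ᵥ v t) l (𝓝 a) := fun x =>
    Submodule.span_induction h ⟨0, by simpa using tendsto_const_nhds⟩
      (fun x y _ _ ⟨a, ha⟩ ⟨b, hb⟩ => ⟨a + b, by simpa [add_dotProduct] using ha.add hb⟩)
      (fun r x _ ⟨a, ha⟩ => ⟨r * a, by simpa [smul_dotProduct] using ha.const_mul r⟩)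
      (hS ▸ Submodule.mem_top : x ∈ Submodule.span ℝ S)
  choose c hc using fun i => hall (Pi.single i 1)
  exact ⟨c, tendsto_pi_nhds.2 fun i => by simpa using hc i⟩

lemma span_eq_top_of_posDef {ι : Type*} [Fintype ι] {μ : Measure (ι → ℝ)} [IsFiniteMeasure μ]
    {S : Set (ι → ℝ)} (hSc : IsCompact S) (hS : ∀ᵐ x ∂μ, x ∈ S)
    (hpos : (Matrix.of fun i j => ∫ x, x i * x j ∂μ).PosDef) : Submodule.span ℝ S = ⊤ := by
  classical
  by_contra hne
  obtain ⟨φ, hφ0, hφS⟩ :=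
    Submodule.exists_dual_map_eq_bot_of_lt_top (lt_top_iff_ne_top.2 hne) inferInstance
  set y : ι → ℝ := fun i => φ fun j => if i = j then 1 else 0
  have hφy : ∀ x, φ x = x ⬝ᵥ y := fun x => by
    simp [LinearMap.pi_apply_eq_sum_univ φ x, dotProduct, y]
  have hy : y ≠ 0 := fun h => hφ0 (LinearMap.ext fun x => by simp [hφy, h])
  have hint : ∀ i j, Integrable (fun x : ι → ℝ => y i * (x i * x j) * y j) μ := fun i j => by
    rw [← Measure.restrict_eq_self_of_ae_mem hS]
    exact ContinuousOn.integrableOn_compact hSc (by fun_prop)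
  have hquad : star y ⬝ᵥ (Matrix.of fun i j => ∫ x, x i * x j ∂μ).mulVec y =
      ∫ x, (x ⬝ᵥ y) ^ 2 ∂μ := by
    calc _ = ∑ i, ∑ j, ∫ x, y i * (x i * x j) * y j ∂μ := by
          simp only [dotProduct, Matrix.mulVec, Matrix.of_apply, star_trivial, Finset.mul_sum,
            integral_mul_const, integral_const_mul]
          simp only [mul_assoc]
      _ = ∫ x, ∑ i, ∑ j, y i * (x i * x j) * y j ∂μ := by
          rw [integral_finsetSum _ fun i _ => integrable_finsetSum _ fun j _ => hint i j]
          exact Finset.sum_congr rfl fun i _ => (integral_finsetSum _ fun j _ => hint i j).symm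
      _ = ∫ x, (x ⬝ᵥ y) ^ 2 ∂μ := by
          congr 1 with x
          rw [sq, dotProduct, Finset.sum_mul_sum]
          exact Finset.sum_congr rfl fun i _ => Finset.sum_congr rfl fun j _ => by ring
  have hzero : ∫ x, (x ⬝ᵥ y) ^ 2 ∂μ = 0 := integral_eq_zero_of_ae <| hS.mono fun x hx => by
    simp [← hφy,
      (Submodule.eq_bot_iff _).1 hφS _ (Submodule.mem_map_of_mem (Submodule.subset_span hx))]
  exact (hpos.dotProduct_mulVec_pos hy).ne' (hquad.trans hzero)

section lowerQuantile

variable {F : ℝ → ℝ} {τ z : ℝ}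

lemma bddBelow_setOf_lt_apply (hF0 : ∀ z < 0, F z = 0) (hτ : 0 ≤ τ) :
    BddBelow {z | τ < F z} :=
  ⟨0, fun z hz => not_lt.1 fun h => (hz.trans_eq (hF0 z h)).not_ge hτ⟩

lemma lowerQuantile_le (hF0 : ∀ z < 0, F z = 0) (hτ : 0 ≤ τ) (hz : τ < F z) :
    lowerQuantile F τ ≤ z :=
  csInf_le (bddBelow_setOf_lt_apply hF0 hτ) hz

lemma apply_le_of_lt_lowerQuantile (hF0 : ∀ z < 0, F z = 0) (hτ : 0 ≤ τ)
    (hz : z < lowerQuantile F τ) : F z ≤ τ :=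
  not_lt.1 fun h => (lowerQuantile_le hF0 hτ h).not_gt hz

lemma lt_apply_of_lowerQuantile_lt (hmono : Monotone F) {w : ℝ} (hw : τ < F w)
    (hz : lowerQuantile F τ < z) : τ < F z := by
  obtain ⟨y, hy, hyz⟩ := exists_lt_of_csInf_lt ⟨w, hw⟩ hz
  exact hy.trans_le (hmono hyz.le)

lemma lowerQuantile_mono (hF0 : ∀ z < 0, F z = 0) {τ₁ τ₂ w : ℝ} (h₀ : 0 ≤ τ₁) (h : τ₁ ≤ τ₂)
    (hw : τ₂ < F w) : lowerQuantile F τ₁ ≤ lowerQuantile F τ₂ :=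
  csInf_le_csInf (bddBelow_setOf_lt_apply hF0 h₀) ⟨w, hw⟩ fun _ hz => h.trans_lt hz

lemma lowerQuantile_pos (hmono : Monotone F) (hlim : Tendsto F (𝓝[>] 0) (𝓝 0)) (hτ : 0 < τ)
    (hτ1 : τ < F 1) : 0 < lowerQuantile F τ := by
  obtain ⟨z₀, hz₀, hz₀_pos⟩ := ((hlim.eventually (gt_mem_nhds hτ)).and self_mem_nhdsWithin).exists
  exact hz₀_pos.trans_le <| le_csInf ⟨1, hτ1⟩ fun z hz =>
    not_lt.1 fun h => (hz.trans_le (hmono h.le)).not_gt hz₀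

lemma lowerQuantile_const_mul {u : ℝ} (hu : 0 < u) (τ : ℝ) :
    lowerQuantile F (u * τ) = lowerQuantile (fun z => F z / u) τ := by
  simp only [lowerQuantile, lt_div_iff₀' hu]

end lowerQuantile

namespace RegularlyVaryingLowerTail

variable {F : ℝ → ℝ} {α : ℝ}

lemma tendsto_zero (hF : RegularlyVaryingLowerTail F α) : Tendsto F (𝓝[>] 0) (𝓝 0) := by
  have hL := hF.monotone.tendsto_nhdsGT 0
  set L := sInf (F '' Ioi 0)
  have hL0 : 0 ≤ L :=
    le_csInf (nonempty_Ioi.image F) (forall_mem_image.2 fun z hz => (hF.pos z hz).le)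
  obtain hL0 | hL0 := hL0.eq_or_lt
  · rwa [← hL0] at hL
  · have h2 := tendsto_nhds_unique (hF.tendsto_ratio 2 two_pos)
      ((hL.comp (tendsto_const_mul_nhdsGT_zero two_pos)).div hL hL0.ne')
    rw [div_self hL0.ne'] at h2
    exact absurd h2 (one_lt_rpow one_lt_two hF.index_pos).ne'

lemma tendsto_lowerQuantile (hF : RegularlyVaryingLowerTail F α) :
    Tendsto (lowerQuantile F) (𝓝[>] 0) (𝓝[>] 0) := by
  have hpos : ∀ᶠ τ in 𝓝[>] 0, 0 < lowerQuantile F τ := by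
    filter_upwards [Ioo_mem_nhdsGT (hF.pos 1 one_pos)] with τ hτ
    exact lowerQuantile_pos hF.monotone hF.tendsto_zero hτ.1 hτ.2
  refine tendsto_nhdsWithin_iff.2 ⟨tendsto_order.2 ⟨fun a ha => ?_, fun b hb => ?_⟩, hpos⟩
  · exact hpos.mono fun τ h => ha.trans h
  · filter_upwards [Ioo_mem_nhdsGT (hF.pos (b / 2) (half_pos hb))] with τ hτ
    exact (lowerQuantile_le hF.eq_zero_of_neg hτ.1.le hτ.2).trans_lt (half_lt_self hb)

lemma eventually_lowerQuantile_pos (hF : RegularlyVaryingLowerTail F α) :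
    ∀ᶠ τ in 𝓝[>] 0, 0 < lowerQuantile F τ :=
  (tendsto_nhdsWithin_iff.1 hF.tendsto_lowerQuantile).2

lemma tendsto_div_apply_lowerQuantile (hF : RegularlyVaryingLowerTail F α) :
    Tendsto (fun τ => τ / F (lowerQuantile F τ)) (𝓝[>] 0) (𝓝 1) := by
  refine tendsto_one_of_rpow_squeeze (α := α)
    (fun θ hθ => (hF.tendsto_ratio θ hθ).comp hF.tendsto_lowerQuantile) (fun θ hθ => ?_)
    (fun θ hθ => ?_)
  · filter_upwards [self_mem_nhdsWithin, hF.eventually_lowerQuantile_pos] with τ hτ hq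
    have hθq : θ * lowerQuantile F τ < lowerQuantile F τ := mul_lt_of_lt_one_left hq hθ.2
    exact div_le_div_of_nonneg_right (apply_le_of_lt_lowerQuantile hF.eq_zero_of_neg hτ.le hθq)
      (hF.pos _ hq).le
  · filter_upwards [Ioo_mem_nhdsGT (hF.pos 1 one_pos), hF.eventually_lowerQuantile_pos]
      with τ hτ hq
    have hθq : lowerQuantile F τ < θ * lowerQuantile F τ := lt_mul_of_one_lt_left hq hθ
    exact div_le_div_of_nonneg_right (lt_apply_of_lowerQuantile_lt hF.monotone hτ.2 hθq).le
      (hF.pos _ hq).le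

lemma tendsto_apply_mul_lowerQuantile_div (hF : RegularlyVaryingLowerTail F α) {G : ℝ → ℝ}
    {k : ℝ} (hG : Tendsto (fun z => G z / F z) (𝓝[>] 0) (𝓝 k)) {v : ℝ} (hv : 0 < v) :
    Tendsto (fun τ => G (v * lowerQuantile F τ) / τ) (𝓝[>] 0) (𝓝 (k * v ^ α)) := by
  have hvq := (tendsto_const_mul_nhdsGT_zero hv).comp hF.tendsto_lowerQuantile
  have h := ((hG.comp hvq).mul ((hF.tendsto_ratio v hv).comp hF.tendsto_lowerQuantile)).div
    hF.tendsto_div_apply_lowerQuantile one_ne_zero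
  rw [div_one] at h
  refine h.congr' ?_
  filter_upwards [self_mem_nhdsWithin, hF.eventually_lowerQuantile_pos] with τ hτ hq
  simp only [Function.comp_apply, Pi.div_apply]
  field_simp [(mem_Ioi.1 hτ).ne', (hF.pos _ hq).ne', (hF.pos _ (mul_pos hv hq)).ne']

lemma tendsto_lowerQuantile_div_lowerQuantile (hF : RegularlyVaryingLowerTail F α)
    {G : ℝ → ℝ} (hGmono : Monotone G) {k c : ℝ}
    (hG : Tendsto (fun z => G z / F z) (𝓝[>] 0) (𝓝 k)) (hc : 0 < c) (hkc : k * c ^ α = 1) :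
    Tendsto (fun τ => lowerQuantile G τ / lowerQuantile F τ) (𝓝[>] 0) (𝓝 c) := by
  have hk : 0 < k := pos_of_mul_pos_left (hkc ▸ one_pos) (rpow_pos_of_pos hc α).le
  have above : ∀ a > c, ∀ᶠ τ in 𝓝[>] 0, τ < G (a * lowerQuantile F τ) := fun a ha => by
    have h1 : 1 < k * a ^ α :=
      hkc ▸ mul_lt_mul_of_pos_left (rpow_lt_rpow hc.le ha hF.index_pos) hk
    filter_upwards [(hF.tendsto_apply_mul_lowerQuantile_div hG (hc.trans ha)).eventually
      (lt_mem_nhds h1), self_mem_nhdsWithin] with τ h hτ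
    exact (one_lt_div hτ).1 h
  have below : ∀ b ∈ Ioo 0 c, ∀ᶠ τ in 𝓝[>] 0, G (b * lowerQuantile F τ) < τ := fun b hb => by
    have h1 : k * b ^ α < 1 :=
      hkc ▸ mul_lt_mul_of_pos_left (rpow_lt_rpow hb.1.le hb.2 hF.index_pos) hk
    filter_upwards [(hF.tendsto_apply_mul_lowerQuantile_div hG hb.1).eventually
      (gt_mem_nhds h1), self_mem_nhdsWithin] with τ h hτ
    exact (div_lt_one hτ).1 h
  have between : ∀ b ∈ Ioo 0 c, ∀ a > c, ∀ᶠ τ in 𝓝[>] 0,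
      b ≤ lowerQuantile G τ / lowerQuantile F τ ∧
        lowerQuantile G τ / lowerQuantile F τ ≤ a := fun b hb a ha => by
    filter_upwards [above a ha, below b hb, hF.eventually_lowerQuantile_pos] with τ ha hb hq
    have hlow : ∀ z ∈ {z | τ < G z}, b * lowerQuantile F τ ≤ z := fun z hz =>
      not_lt.1 fun h => (hGmono h.le).not_gt (hb.trans hz)
    exact ⟨(le_div_iff₀ hq).2 (le_csInf ⟨_, ha⟩ hlow),
      (div_le_iff₀ hq).2 (csInf_le ⟨_, hlow⟩ ha)⟩
  refine tendsto_order.2 ⟨fun b' hb' => ?_, fun a' ha' => ?_⟩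
  · obtain ⟨b, hb'b, hbc⟩ := exists_between (max_lt hb' hc)
    filter_upwards [between b ⟨(le_max_right _ _).trans_lt hb'b, hbc⟩ (c + 1) (lt_add_one c)]
      with τ h
    exact ((le_max_left _ _).trans_lt hb'b).trans_le h.1
  · obtain ⟨a, hca, haa'⟩ := exists_between ha'
    filter_upwards [between (c / 2) ⟨half_pos hc, half_lt_self hc⟩ a hca] with τ h
    exact h.2.trans_lt haa'

lemma tendsto_lowerQuantile_mul_div (hF : RegularlyVaryingLowerTail F α) {u : ℝ} (hu : 0 < u) :
    Tendsto (fun τ => lowerQuantile F (u * τ) / lowerQuantile F τ) (𝓝[>] 0)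
      (𝓝 (u ^ α⁻¹)) := by
  simp_rw [lowerQuantile_const_mul hu]
  refine hF.tendsto_lowerQuantile_div_lowerQuantile (k := u⁻¹)
    (fun _ _ h => by gcongr; exact hF.monotone h) (tendsto_const_nhds.congr' ?_)
    (rpow_pos_of_pos hu _) ?_
  · filter_upwards [self_mem_nhdsWithin] with z hz
    field_simp [(hF.pos z hz).ne']
  · rw [rpow_inv_rpow hu.le hF.index_pos.ne', inv_mul_cancel₀ hu.ne']

lemma tendsto_lowerQuantile_mul_div_prod (hF : RegularlyVaryingLowerTail F α) {m : ℝ}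
    (hm : 0 < m) :
    Tendsto (fun p : ℝ × ℝ => lowerQuantile F (p.2 * p.1) / lowerQuantile F p.1)
      (𝓝[>] 0 ×ˢ 𝓝 m) (𝓝 (m ^ α⁻¹)) := by
  refine tendsto_uncurry_of_monotoneOn
    (f := fun τ y => lowerQuantile F (y * τ) / lowerQuantile F τ)
    (Ioo_mem_nhds (half_lt_self hm) (lt_two_mul_self hm)) ?_
    (fun y hy => hF.tendsto_lowerQuantile_mul_div ((half_pos hm).trans hy.1))
    (Real.continuousAt_rpow_const m _ (Or.inl hm.ne'))
  filter_upwards [self_mem_nhdsWithin, hF.eventually_lowerQuantile_pos,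
    Ioo_mem_nhdsGT (div_pos (hF.pos 1 one_pos) (mul_pos two_pos hm))]
    with τ hτ hq hτm y₁ hy₁ y₂ hy₂ hy
  have hy₂τ : y₂ * τ < F 1 := by
    calc y₂ * τ < 2 * m * τ := by gcongr; exact hy₂.2
      _ < F 1 := (lt_div_iff₀' (mul_pos two_pos hm)).1 hτm.2
  exact div_le_div_of_nonneg_right (lowerQuantile_mono hF.eq_zero_of_neg
    (mul_pos ((half_pos hm).trans hy₁.1) hτ).le (by gcongr; exact le_of_lt hτ) hy₂τ) hq.le

lemma eventually_lowerQuantile_mul_sub_ne_zero (hF : RegularlyVaryingLowerTail F α) {m : ℝ}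
    (hm : 0 < m) (hm1 : m ≠ 1) :
    ∀ᶠ p in 𝓝[>] 0 ×ˢ 𝓝 m, lowerQuantile F (p.2 * p.1) - lowerQuantile F p.1 ≠ 0 := by
  filter_upwards [(hF.tendsto_lowerQuantile_mul_div_prod hm).eventually_ne
    (rpow_ne_one hm.le hm1 (inv_ne_zero hF.index_pos.ne')),
    tendsto_fst.eventually hF.eventually_lowerQuantile_pos] with p h hq
  exact sub_ne_zero.2 fun h' => h ((div_eq_one_iff_eq hq.ne').2 h')

lemma tendsto_div_lowerQuantile_mul_sub (hF : RegularlyVaryingLowerTail F α) {w : ℝ → ℝ}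
    {a m : ℝ} (hw : Tendsto (fun σ => w σ / lowerQuantile F σ) (𝓝[>] 0) (𝓝 a)) (hm : 0 < m)
    (hm1 : m ≠ 1) :
    Tendsto (fun p : ℝ × ℝ => w p.1 / (lowerQuantile F (p.2 * p.1) - lowerQuantile F p.1))
      (𝓝[>] 0 ×ˢ 𝓝 m) (𝓝 (a / (m ^ α⁻¹ - 1))) := by
  refine ((hw.comp tendsto_fst).div ((hF.tendsto_lowerQuantile_mul_div_prod hm).sub_const 1)
    (sub_ne_zero.2 (rpow_ne_one hm.le hm1 (inv_ne_zero hF.index_pos.ne')))).congr' ?_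
  filter_upwards [tendsto_fst.eventually hF.eventually_lowerQuantile_pos] with p hq
  rw [Pi.div_apply, Function.comp_apply, div_sub_one hq.ne', div_div_div_cancel_right₀ hq.ne']

lemma exists_tendsto_div_lowerQuantile (hF : RegularlyVaryingLowerTail F α) {ι : Type*}
    [Fintype ι] {S : Set (ι → ℝ)} (hS : Submodule.span ℝ S = ⊤) {G : (ι → ℝ) → ℝ → ℝ}
    (hGmono : ∀ x ∈ S, Monotone (G x)) {K : (ι → ℝ) → ℝ}
    (hG : ∀ x ∈ S, Tendsto (fun z => G x z / F z) (𝓝[>] 0) (𝓝 (K x))) (hK : ∀ x ∈ S, 0 < K x)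
    {γ : ℝ → ι → ℝ} (hγ : ∀ x ∈ S, ∀ᶠ τ in 𝓝[>] 0, lowerQuantile (G x) τ = x ⬝ᵥ γ τ) :
    ∃ c, Tendsto (fun τ i => γ τ i / lowerQuantile F τ) (𝓝[>] 0) (𝓝 c) ∧
      ∀ x ∈ S, x ⬝ᵥ c = K x ^ (-α⁻¹) := by
  have hS' : ∀ x ∈ S, Tendsto (fun τ => x ⬝ᵥ fun i => γ τ i / lowerQuantile F τ) (𝓝[>] 0)
      (𝓝 (K x ^ (-α⁻¹))) := fun x hx => by
    refine (hF.tendsto_lowerQuantile_div_lowerQuantile (hGmono x hx) (hG x hx)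
      (rpow_pos_of_pos (hK x hx) _) ?_).congr' ?_
    · rw [← rpow_mul (hK x hx).le, neg_mul, inv_mul_cancel₀ hF.index_pos.ne', rpow_neg_one,
        mul_inv_cancel₀ (hK x hx).ne']
    · filter_upwards [hγ x hx] with τ h
      simp [h, dotProduct, Finset.sum_div, mul_div_assoc]
  obtain ⟨c, hc⟩ := exists_tendsto_of_span_eq_top hS fun x hx => ⟨_, hS' x hx⟩
  exact ⟨c, hc, fun x hx => tendsto_nhds_unique
    (((continuous_const.dotProduct continuous_id).tendsto c).comp hc) (hS' x hx)⟩

lemma eventually_forall_abs_div_lowerQuantile_mul_sub_lt (hF : RegularlyVaryingLowerTail F α)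
    {w : ℝ → ℝ} {a : ℝ} (hw : Tendsto (fun σ => w σ / lowerQuantile F σ) (𝓝[>] 0) (𝓝 a))
    {M L : Set ℝ} (hM : IsCompact M) (hM0 : M ⊆ Ioi 0) (hM1 : 1 ∉ M) (hL : IsCompact L)
    (hL0 : L ⊆ Ioi 0) {ε : ℝ} (hε : 0 < ε) :
    ∀ᶠ τ in 𝓝[>] 0, ∀ m ∈ M, ∀ s ∈ L,
      |w (s * τ) / (lowerQuantile F (m * s * τ) - lowerQuantile F (s * τ)) -
        a / (m ^ α⁻¹ - 1)| < ε := by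
  have hne : ∀ m ∈ M, m ^ α⁻¹ - 1 ≠ 0 := fun m hm =>
    sub_ne_zero.2 (rpow_ne_one (hM0 hm).le (ne_of_mem_of_not_mem hm hM1)
      (inv_ne_zero hF.index_pos.ne'))
  filter_upwards [(hM.prod hL).eventually_forall_abs_sub_lt
    (f := fun τ y => w (y.2 * τ) / (lowerQuantile F (y.1 * (y.2 * τ)) - lowerQuantile F (y.2 * τ)))
    (fun y hy => (hF.tendsto_div_lowerQuantile_mul_sub hw (hM0 hy.1)
      (ne_of_mem_of_not_mem hy.1 hM1)).comp (tendsto_mul_fst_snd_nhdsGT_zero (hL0 hy.2)))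
    (fun y hy => continuousAt_const.div (((continuousAt_rpow_const _ _
      (Or.inl (hM0 hy.1).ne')).comp continuousAt_fst).sub continuousAt_const) (hne _ hy.1)) hε]
    with τ h m hm s hs
  rw [mul_assoc]
  exact h (m, s) ⟨hm, hs⟩

lemma eventually_forall_lowerQuantile_mul_sub_ne_zero (hF : RegularlyVaryingLowerTail F α)
    {M L : Set ℝ} (hM : IsCompact M) (hM0 : M ⊆ Ioi 0) (hM1 : 1 ∉ M) (hL : IsCompact L)
    (hL0 : L ⊆ Ioi 0) :
    ∀ᶠ τ in 𝓝[>] 0, ∀ m ∈ M, ∀ s ∈ L,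
      lowerQuantile F (m * s * τ) - lowerQuantile F (s * τ) ≠ 0 := by
  filter_upwards [(hM.prod hL).eventually_forall_of_forall_eventually_prod
    (P := fun τ y => lowerQuantile F (y.1 * (y.2 * τ)) - lowerQuantile F (y.2 * τ) ≠ 0)
    fun y hy => (tendsto_mul_fst_snd_nhdsGT_zero (hL0 hy.2)).eventually
      (hF.eventually_lowerQuantile_mul_sub_ne_zero (hM0 hy.1) (ne_of_mem_of_not_mem hy.1 hM1))]
    with τ h m hm s hs
  rw [mul_assoc]
  exact h (m, s) ⟨hm, hs⟩

end RegularlyVaryingLowerTail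

theorem extremal_qr_lem91iii_type3_general
    (d : ℕ) (hd : 1 ≤ d)
    (μ : Measure (Fin d → ℝ)) [IsProbabilityMeasure μ]
    (Xs : Set (Fin d → ℝ))
    (hXssupp : ∀ x, x ∈ Xs ↔ ∀ U ∈ 𝓝 x, 0 < μ U)
    (hXscpt : IsCompact Xs)
    (hposdef : (Matrix.of fun i j : Fin d => ∫ x, x i * x j ∂μ).PosDef)
    (hmean : ∀ i : Fin d, (∫ x, x i ∂μ) = if (i : ℕ) = 0 then (1:ℝ) else 0)
    (η : ℝ) (hη : η ∈ Set.Ioc (0:ℝ) 1)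
    (γ : ℝ → Fin d → ℝ)
    (F : (Fin d → ℝ) → ℝ → ℝ)
    (hFmono : ∀ x ∈ Xs, Monotone (F x))
    (hlin : ∀ τ ∈ Set.Ioc (0:ℝ) η, ∀ x ∈ Xs, sInf {z | τ < F x z} = ∑ i, x i * γ τ i)
    (Fu : ℝ → ℝ)
    (hFumono : Monotone Fu)
    (hFuinv : ∀ τ ∈ Set.Ioc (0:ℝ) η, sInf {z | τ < Fu z} = ∑ i, (∫ x, x i ∂μ) * γ τ i)
    (K : (Fin d → ℝ) → ℝ)
    (hKpos : ∀ x ∈ Xs, 0 < K x)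
    (ξ : ℝ) (hξ : ξ < 0)
    (hFu0 : ∀ z < (0:ℝ), Fu z = 0)
    (hFupos : ∀ z > (0:ℝ), 0 < Fu z)
    (hreg : ∀ v > (0:ℝ), Tendsto (fun z => Fu (v * z) / Fu z) (𝓝[>] (0:ℝ)) (𝓝 (v ^ (-1/ξ))))
    (htaileq : TendstoUniformlyOn (fun z x => F x z / Fu z) K (𝓝[>] (0:ℝ)) Xs)
    :
    ∃ c : Fin d → ℝ, (∑ i, (∫ x, x i ∂μ) * c i) = 1 ∧
      (∀ x ∈ Xs, 0 < (∑ i, x i * c i) ∧ K x = (∑ i, x i * c i) ^ (1/ξ)) ∧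
      ∀ M : Set ℝ, IsCompact M → M ⊆ Set.Ioo 0 1 ∪ Set.Ioi 1 →
      ∀ L : Set ℝ, IsCompact L → L ⊆ Set.Ioi 0 →
        ((∀ ε > (0:ℝ), ∀ᶠ τ' in 𝓝[>] (0:ℝ), ∀ m ∈ M, ∀ s ∈ L, ∀ i : Fin d, (i : ℕ) ≠ 0 →
            |γ (s * τ') i / (sInf {z | m * s * τ' < Fu z} - sInf {z | s * τ' < Fu z}) -
              c i / (m ^ (-ξ) - 1)| < ε) ∧
          (∀ᶠ τ' in 𝓝[>] (0:ℝ), ∀ m ∈ M, ∀ s ∈ L,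
            sInf {z | m * s * τ' < Fu z} - sInf {z | s * τ' < Fu z} ≠ 0)) ∧
        (∀ ε > (0:ℝ), ∀ᶠ τ' in 𝓝[>] (0:ℝ), ∀ s ∈ L, ∀ i : Fin d, (i : ℕ) ≠ 0 →
          |γ (s * τ') i / sInf {z | s * τ' < Fu z} - c i| < ε) := by
  have hFu : RegularlyVaryingLowerTail Fu (-1 / ξ) :=
    ⟨hFumono, hFu0, hFupos, div_pos_of_neg_of_neg (by norm_num) hξ, hreg⟩
  have hexp : (-1 / ξ)⁻¹ = -ξ := by rw [inv_div, div_neg, div_one]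
  have hmean' : ∀ w : Fin d → ℝ, ∑ i, (∫ x, x i ∂μ) * w i = w ⟨0, hd⟩ := fun w => by
    simp [hmean, ← Fin.ext_iff (b := ⟨0, hd⟩)]
  have hXs : ∀ᵐ x ∂μ, x ∈ Xs := by
    have : Xs = μ.support := Set.ext fun x => (hXssupp x).trans (μ.mem_support_iff_forall x).symm
    exact this ▸ Measure.support_mem_ae
  obtain ⟨c, hc, hcK⟩ := hFu.exists_tendsto_div_lowerQuantile
    (span_eq_top_of_posDef hXscpt hXs hposdef) hFmono (fun x hx => htaileq.tendsto_at hx) hKpos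
    fun x hx => by
      filter_upwards [Ioo_mem_nhdsGT hη.1] with τ hτ using hlin τ (Ioo_subset_Ioc_self hτ) x hx
  rw [hexp, neg_neg] at hcK
  have hci : ∀ i, Tendsto (fun σ => γ σ i / lowerQuantile Fu σ) (𝓝[>] 0) (𝓝 (c i)) :=
    tendsto_pi_nhds.1 hc
  have hc₀ : c ⟨0, hd⟩ = 1 := by
    refine tendsto_nhds_unique (hci _) (tendsto_const_nhds.congr' ?_)
    filter_upwards [Ioo_mem_nhdsGT hη.1, hFu.eventually_lowerQuantile_pos] with τ hτ hq
    rw [lowerQuantile, hFuinv τ (Ioo_subset_Ioc_self hτ), hmean'] at hq ⊢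
    exact (div_self hq.ne').symm
  refine ⟨c, (hmean' c).trans hc₀, fun x hx => ?_, fun M hM hM01 L hL hL0 => ?_⟩
  · change 0 < x ⬝ᵥ c ∧ K x = (x ⬝ᵥ c) ^ (1 / ξ)
    rw [hcK x hx, ← rpow_mul (hKpos x hx).le, mul_one_div_cancel hξ.ne, rpow_one]
    exact ⟨rpow_pos_of_pos (hKpos x hx) ξ, rfl⟩
  have hM0 : M ⊆ Ioi 0 := fun m hm => (hM01 hm).elim (·.1) fun h => mem_Ioi.2 (one_pos.trans h)
  have hM1 : 1 ∉ M := fun h => (hM01 h).elim (·.2.false) (lt_irrefl 1 <| mem_Ioi.1 ·)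
  rw [← hexp]
  refine ⟨⟨fun ε hε => ?_, hFu.eventually_forall_lowerQuantile_mul_sub_ne_zero hM hM0 hM1 hL hL0⟩,
    fun ε hε => ?_⟩
  · filter_upwards [eventually_all.2 fun i => hFu.eventually_forall_abs_div_lowerQuantile_mul_sub_lt
      (hci i) hM hM0 hM1 hL hL0 hε] with τ h m hm s hs i _ using h i m hm s hs
  · filter_upwards [eventually_all.2 fun i =>
      eventually_forall_abs_comp_mul_sub_lt (hci i) hL hL0 hε] with τ h s hs i _ using h i s hs

theorem extremal_qr_lem91iii_type3
    (d : ℕ) (hd : 1 ≤ d)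
    (μ : Measure (Fin d → ℝ)) [IsProbabilityMeasure μ]
    (Xs : Set (Fin d → ℝ))
    (hXssupp : ∀ x, x ∈ Xs ↔ ∀ U ∈ 𝓝 x, 0 < μ U)
    (hXscpt : IsCompact Xs)
    (hposdef : (Matrix.of fun i j : Fin d => ∫ x, x i * x j ∂μ).PosDef)
    (hmean : ∀ i : Fin d, (∫ x, x i ∂μ) = if (i : ℕ) = 0 then (1:ℝ) else 0)
    (η : ℝ) (hη : η ∈ Set.Ioc (0:ℝ) 1)
    (γ : ℝ → Fin d → ℝ)
    (F : (Fin d → ℝ) → ℝ → ℝ)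
    (hFmono : ∀ x ∈ Xs, Monotone (F x))
    (hFrc : ∀ x ∈ Xs, ∀ z : ℝ, ContinuousWithinAt (F x) (Set.Ici z) z)
    (hFrange : ∀ x ∈ Xs, ∀ z : ℝ, F x z ∈ Set.Icc (0:ℝ) 1)
    (hlin : ∀ τ ∈ Set.Ioc (0:ℝ) η, ∀ x ∈ Xs, sInf {z | τ < F x z} = ∑ i, x i * γ τ i)
    (Fu : ℝ → ℝ)
    (hFumono : Monotone Fu)
    (hFurc : ∀ z : ℝ, ContinuousWithinAt Fu (Set.Ici z) z)
    (hFurange : ∀ z : ℝ, Fu z ∈ Set.Icc (0:ℝ) 1)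
    (hFuinv : ∀ τ ∈ Set.Ioc (0:ℝ) η, sInf {z | τ < Fu z} = ∑ i, (∫ x, x i ∂μ) * γ τ i)
    (K : (Fin d → ℝ) → ℝ)
    (hKcont : ContinuousOn K Xs)
    (hKbdd : BddAbove (K '' Xs))
    (hKpos : ∀ x ∈ Xs, 0 < K x)
    (ξ : ℝ) (hξ : ξ < 0)
    (hFu0 : ∀ z < (0:ℝ), Fu z = 0)
    (hFupos : ∀ z > (0:ℝ), 0 < Fu z)
    (hreg : ∀ v > (0:ℝ), Tendsto (fun z => Fu (v * z) / Fu z) (𝓝[>] (0:ℝ)) (𝓝 (v ^ (-1/ξ))))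
    (htaileq : TendstoUniformlyOn (fun z x => F x z / Fu z) K (𝓝[>] (0:ℝ)) Xs)
    :
    ∃ c : Fin d → ℝ, (∑ i, (∫ x, x i ∂μ) * c i) = 1 ∧
      (∀ x ∈ Xs, 0 < (∑ i, x i * c i) ∧ K x = (∑ i, x i * c i) ^ (1/ξ)) ∧
      ∀ M : Set ℝ, IsCompact M → M ⊆ Set.Ioo 0 1 ∪ Set.Ioi 1 →
      ∀ L : Set ℝ, IsCompact L → L ⊆ Set.Ioi 0 →
        ((∀ ε > (0:ℝ), ∀ᶠ τ' in 𝓝[>] (0:ℝ), ∀ m ∈ M, ∀ s ∈ L, ∀ i : Fin d, (i : ℕ) ≠ 0 →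
            |γ (s * τ') i / (sInf {z | m * s * τ' < Fu z} - sInf {z | s * τ' < Fu z}) -
              c i / (m ^ (-ξ) - 1)| < ε) ∧
          (∀ᶠ τ' in 𝓝[>] (0:ℝ), ∀ m ∈ M, ∀ s ∈ L,
            sInf {z | m * s * τ' < Fu z} - sInf {z | s * τ' < Fu z} ≠ 0)) ∧
        (∀ ε > (0:ℝ), ∀ᶠ τ' in 𝓝[>] (0:ℝ), ∀ s ∈ L, ∀ i : Fin d, (i : ℕ) ≠ 0 →
          |γ (s * τ') i / sInf {z | s * τ' < Fu z} - c i| < ε) :=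
  extremal_qr_lem91iii_type3_general d hd μ Xs hXssupp hXscpt hposdef hmean η hη γ F hFmono hlin Fu
    hFumono hFuinv K hKpos ξ hξ hFu0 hFupos hreg htaileq
end
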